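/- Let γ > 0, let δ, l, l̇ : [0,T] → ℝ be continuous with l(t) ≠ 0, and let q : [0,T] → ℝ⁴ be differentiable with q̇(t) = Φ(q(t)) − γ·(‖q(t)‖² − 1)·q(t). If ‖q(0)‖ = 1, then ‖q(t)‖ = 1 for all t ∈ [0,T]; i.e. the unit sphere is invariant under the norm-stabilized kite dynamics. -/

import Mathlib

/-! The kite field `Φ` is tangent to every sphere `‖q‖ = const`, so along a trajectory
`r = ‖q‖² - 1` obeys the linear equation `ṙ = -2γ‖q‖² r`. Since `‖q‖²` is bounded on the compact
time interval, Grönwall's inequality forces `r ≡ 0` once `r(0) = 0`. -/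

open Set
open scoped RealInnerProductSpace

noncomputable def kitePhi (E vw gk δ l ldot : ℝ) (q : EuclideanSpace ℝ (Fin 4)) :
    EuclideanSpace ℝ (Fin 4) :=
  let va := E * vw * (q 0 ^ 2 + q 1 ^ 2 - q 2 ^ 2 - q 3 ^ 2) - E * ldot
  (va / (2 * l)) • (WithLp.toLp 2 ![-(q 2), -(q 3), q 0, q 1] : EuclideanSpace ℝ (Fin 4))
    + (vw / l) • (WithLp.toLp 2 ![q 0 * (q 2 ^ 2 + q 3 ^ 2), q 1 * (q 2 ^ 2 + q 3 ^ 2),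
        -(q 2) * (q 0 ^ 2 + q 1 ^ 2), -(q 3) * (q 0 ^ 2 + q 1 ^ 2)] :
        EuclideanSpace ℝ (Fin 4))
    + (gk * va * δ / 2) • (WithLp.toLp 2 ![q 1, -(q 0), -(q 3), q 2] : EuclideanSpace ℝ (Fin 4))

theorem inner_kitePhi_eq_zero (E vw gk δ l ldot : ℝ) (q : EuclideanSpace ℝ (Fin 4)) :
    ⟪q, kitePhi E vw gk δ l ldot q⟫ = 0 := by
  simp only [kitePhi, PiLp.inner_apply, PiLp.add_apply, PiLp.smul_apply,
    RCLike.inner_apply, conj_trivial, Fin.sum_univ_four, smul_eq_mul, Matrix.cons_val_zero,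
    Matrix.cons_val_one, Matrix.cons_val_two, Matrix.cons_val_three, Matrix.head_cons,
    Matrix.tail_cons]
  ring

section NormDamping

variable {F : Type*} [NormedAddCommGroup F] [InnerProductSpace ℝ F]

theorem HasDerivWithinAt.norm_sq_sub_one_of_inner_eq_zero {f : ℝ → F} {v : F} {γ t : ℝ}
    {s : Set ℝ} (hv : ⟪f t, v⟫ = 0)
    (hf : HasDerivWithinAt f (v - (γ * (‖f t‖ ^ 2 - 1)) • f t) s t) :
    HasDerivWithinAt (fun u => ‖f u‖ ^ 2 - 1) (-(2 * γ * ‖f t‖ ^ 2) * (‖f t‖ ^ 2 - 1)) s t := by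
  refine (hf.norm_sq.sub_const 1).congr_deriv ?_
  rw [inner_sub_right, hv, real_inner_smul_right, real_inner_self_eq_norm_sq]
  ring

theorem norm_eq_one_of_hasDerivWithinAt_of_inner_eq_zero {f φ : ℝ → F} {γ a b : ℝ}
    (hφ : ∀ t ∈ Icc a b, ⟪f t, φ t⟫ = 0)
    (hf : ∀ t ∈ Icc a b,
      HasDerivWithinAt f (φ t - (γ * (‖f t‖ ^ 2 - 1)) • f t) (Icc a b) t)
    (ha : ‖f a‖ = 1) :
    ∀ t ∈ Icc a b, ‖f t‖ = 1 := by
  have hfc : ContinuousOn f (Icc a b) := fun t ht => (hf t ht).continuousWithinAt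
  obtain ⟨C, hC⟩ := isCompact_Icc.exists_bound_of_continuousOn hfc
  have hr : ∀ t ∈ Icc a b, ‖f t‖ ^ 2 - 1 = 0 := by
    refine eq_zero_of_abs_deriv_le_mul_abs_self_of_eq_zero_right
      (f' := fun t => -(2 * γ * ‖f t‖ ^ 2) * (‖f t‖ ^ 2 - 1)) (K := 2 * |γ| * C ^ 2)
      ((hfc.norm.pow 2).sub continuousOn_const) (fun t ht => ?_) (by simp [ha]) (fun t ht => ?_)
    · exact ((hf t (Ico_subset_Icc_self ht)).norm_sq_sub_one_of_inner_eq_zero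
        (hφ t (Ico_subset_Icc_self ht))).mono_of_mem_nhdsWithin (Icc_mem_nhdsGE_of_mem ht)
    · have hfC : ‖f t‖ ^ 2 ≤ C ^ 2 :=
        pow_le_pow_left₀ (norm_nonneg _) (hC t (Ico_subset_Icc_self ht)) 2
      rw [norm_mul, norm_neg, Real.norm_eq_abs, abs_mul, abs_mul, abs_two, abs_sq]
      gcongr
  intro t ht
  exact (pow_eq_one_iff_of_nonneg (norm_nonneg _) two_ne_zero).mp (sub_eq_zero.mp (hr t ht))

end NormDamping

theorem kite_stabilized_unit_sphere_invariant_general (E vw gk γ T : ℝ)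
    (q : ℝ → EuclideanSpace ℝ (Fin 4)) (l δ ldot : ℝ → ℝ)
    (hq : ∀ t ∈ Set.Icc 0 T, HasDerivWithinAt q
      (kitePhi E vw gk (δ t) (l t) (ldot t) (q t)
        - (γ * (‖q t‖ ^ 2 - 1)) • q t) (Set.Icc 0 T) t)
    (hq0 : ‖q 0‖ = 1) :
    ∀ t ∈ Set.Icc 0 T, ‖q t‖ = 1 :=
  norm_eq_one_of_hasDerivWithinAt_of_inner_eq_zero
    (fun t _ => inner_kitePhi_eq_zero E vw gk (δ t) (l t) (ldot t) (q t)) hq hq0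

/-- The unit sphere is invariant under the norm-stabilized kite dynamics. -/
theorem kite_stabilized_unit_sphere_invariant (E vw gk γ T : ℝ) (hγ : 0 < γ)
    (q : ℝ → EuclideanSpace ℝ (Fin 4)) (l δ ldot : ℝ → ℝ)
    (hδc : ContinuousOn δ (Set.Icc 0 T))
    (hlc : ContinuousOn l (Set.Icc 0 T))
    (hldotc : ContinuousOn ldot (Set.Icc 0 T))
    (hl : ∀ t ∈ Set.Icc 0 T, l t ≠ 0)
    (hq : ∀ t ∈ Set.Icc 0 T, HasDerivWithinAt q
      (kitePhi E vw gk (δ t) (l t) (ldot t) (q t)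
        - (γ * (‖q t‖ ^ 2 - 1)) • q t) (Set.Icc 0 T) t)
    (hq0 : ‖q 0‖ = 1) :
    ∀ t ∈ Set.Icc 0 T, ‖q t‖ = 1 :=
  kite_stabilized_unit_sphere_invariant_general E vw gk γ T q l δ ldot hq hq0
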